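/- arXiv:2412.17074 — 5 statements merged into one kernel-verified Lean document; each statement's English description precedes it below -/
import Mathlib

section
/- If G is a connected graph with at least 2 vertices whose vertex set is partitioned into k true twin equivalence classes, then the local metric dimension of G is at least n(G) - k. -/
open SimpleGraph

variable {V : Type*}

/-- `W` is a local resolving set of `G`: any two adjacent vertices outside `W`
have different distance to some vertex of `W`. -/
def IsLocalResolvingSet [Fintype V] (G : SimpleGraph V) (W : Finset V) : Prop :=
  ∀ u v : V, u ∉ W → v ∉ W → G.Adj u v → ∃ w ∈ W, G.dist u w ≠ G.dist v w

/-- The local metric dimension of `G`: minimum cardinality of a local resolving set. -/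
noncomputable def localDim [Fintype V] (G : SimpleGraph V) : ℕ :=
  sInf {k | ∃ W : Finset V, IsLocalResolvingSet G W ∧ W.card = k}

/-- `K_n^-(λ,μ)`: complete graph on `Fin n` minus the edges of a complete bipartite
subgraph between `L = [0,lam)` and `M = [lam, lam+mu)`. -/
def KnMinus (n lam mu : ℕ) : SimpleGraph (Fin n) where
  Adj u v := u ≠ v ∧ ¬((u.val < lam ∧ lam ≤ v.val ∧ v.val < lam + mu) ∨
                       (v.val < lam ∧ lam ≤ u.val ∧ u.val < lam + mu))
  symm := by
    constructor
    intro u v ⟨h1, h2⟩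
    exact ⟨h1.symm, fun h => h2 h.symm⟩
  loopless := ⟨fun u h => h.1 rfl⟩

/-- The graph `Γ₁`: a `K₄` on `{0,1,2,3}` plus edges `0-4`, `1-4`, `0-5`, `2-5`
(vertices `0,…,5` standing for `v₁,…,v₆`). -/
def Gamma1 : SimpleGraph (Fin 6) :=
  SimpleGraph.fromRel (fun u v => ((u : ℕ), (v : ℕ)) ∈
    [(0,1),(0,2),(0,3),(1,2),(1,3),(2,3),(0,4),(1,4),(0,5),(2,5)])

/-- The graph `Γ₂ = Γ₁` plus the edge `v₅v₆`. -/
def Gamma2 : SimpleGraph (Fin 6) :=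
  SimpleGraph.fromRel (fun u v => ((u : ℕ), (v : ℕ)) ∈
    [(0,1),(0,2),(0,3),(1,2),(1,3),(2,3),(0,4),(1,4),(0,5),(2,5),(4,5)])

/-- `G_ℓ`: a universal vertex (`none`) joined to the disjoint union of `ℓ` triangles. -/
def Gell (l : ℕ) : SimpleGraph (Option (Fin l × Fin 3)) where
  Adj u v := u ≠ v ∧ ∀ x y, u = some x → v = some y → x.1 = y.1
  symm := by
    constructor
    intro u v ⟨h1, h2⟩
    exact ⟨h1.symm, fun x y hx hy => (h2 y x hy hx).symm⟩
  loopless := ⟨fun u h => h.1 rfl⟩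

/-!
Two distinct true twins `u, v` are adjacent and every vertex `w ∉ {u, v}` sees them at the same
distance, so a local resolving set must contain one of them. Hence the vertices outside a local
resolving set lie in pairwise different twin classes, and there are at most `k` of them.
-/

namespace SimpleGraph

def TrueTwins (G : SimpleGraph V) (u v : V) : Prop :=
  ∀ x, (G.Adj u x ∨ u = x) ↔ (G.Adj v x ∨ v = x)

variable {G : SimpleGraph V} {u v w : V}

lemma TrueTwins.adj (h : G.TrueTwins u v) (hne : u ≠ v) : G.Adj u v :=
  ((h v).2 (.inr rfl)).resolve_right hne

lemma edist_le_edist_of_closedNbhd_subset (h : ∀ x, G.Adj v x ∨ v = x → G.Adj u x ∨ u = x)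
    (hvw : v ≠ w) : G.edist u w ≤ G.edist v w := by
  by_cases hr : G.Reachable v w
  swap
  · exact (edist_eq_top_of_not_reachable hr).symm ▸ le_top
  obtain ⟨p, hp⟩ := hr.exists_walk_length_eq_edist
  cases p with
  | nil => exact absurd rfl hvw
  | cons hadj q =>
    -- the first step of a shortest `v`-`w` walk lies in the closed neighbourhood of `u`
    calc G.edist u w ≤ G.edist u _ + G.edist _ w := G.edist_triangle
      _ ≤ 1 + q.length :=
          add_le_add (edist_le_one_iff_adj_or_eq.2 (h _ (.inl hadj))) (edist_le q)
      _ = G.edist v w := by rw [← hp, Walk.length_cons, add_comm]; push_cast; rfl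

lemma TrueTwins.dist_eq (h : G.TrueTwins u v) (huw : u ≠ w) (hvw : v ≠ w) :
    G.dist u w = G.dist v w :=
  congrArg ENat.toNat <| le_antisymm
    (edist_le_edist_of_closedNbhd_subset (fun x => (h x).2) hvw)
    (edist_le_edist_of_closedNbhd_subset (fun x => (h x).1) huw)

end SimpleGraph

section LocalResolvingSet

variable [Fintype V] {G : SimpleGraph V} {W : Finset V}

lemma IsLocalResolvingSet.mem_or_mem_of_trueTwins (hW : IsLocalResolvingSet G W) {u v : V}
    (h : G.TrueTwins u v) (hne : u ≠ v) : u ∈ W ∨ v ∈ W := by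
  by_contra! huv
  obtain ⟨w, hwW, hdist⟩ := hW u v huv.1 huv.2 (h.adj hne)
  exact hdist <| h.dist_eq (fun huw => huv.1 (huw ▸ hwW)) (fun hvw => huv.2 (hvw ▸ hwW))

lemma IsLocalResolvingSet.card_sub_card_le {ι : Type*} [Fintype ι] (hW : IsLocalResolvingSet G W)
    (f : V → ι) (hf : ∀ u v, f u = f v → G.TrueTwins u v) :
    Fintype.card V - Fintype.card ι ≤ W.card := by
  classical
  have hinj : Set.InjOn f (Wᶜ : Finset V) := by
    intro u hu v hv huv
    by_contra hne
    simp only [Finset.coe_compl, Set.mem_compl_iff, Finset.mem_coe] at hu hv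
    exact (hW.mem_or_mem_of_trueTwins (hf u v huv) hne).elim hu hv
  have hcompl : (Wᶜ : Finset V).card ≤ Fintype.card ι :=
    Finset.card_le_card_of_injOn f (fun _ _ => Finset.mem_univ _) hinj
  rw [Finset.card_compl] at hcompl
  omega

lemma exists_isLocalResolvingSet_card_eq_localDim (G : SimpleGraph V) :
    ∃ W : Finset V, IsLocalResolvingSet G W ∧ W.card = localDim G :=
  Nat.sInf_mem (s := {k | ∃ W : Finset V, IsLocalResolvingSet G W ∧ W.card = k})
    ⟨_, Finset.univ, fun u _ hu => absurd (Finset.mem_univ u) hu, rfl⟩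

end LocalResolvingSet

theorem stmt_0_general [Fintype V] (G : SimpleGraph V) (k : ℕ) (f : V → Fin k)
    (hf : ∀ u v : V, f u = f v ↔
      ∀ x : V, (G.Adj u x ∨ u = x) ↔ (G.Adj v x ∨ v = x)) :
    Fintype.card V - k ≤ localDim G := by
  obtain ⟨W, hW, hWcard⟩ := exists_isLocalResolvingSet_card_eq_localDim G
  simpa [hWcard] using hW.card_sub_card_le f fun u v => (hf u v).1

/-- If a connected graph `G` with at least 2 vertices has its vertex set partitioned into
`k` true twin equivalence classes, then `dim_l(G) ≥ n(G) - k`. -/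
theorem stmt_0 [Fintype V] (G : SimpleGraph V) (hn : 2 ≤ Fintype.card V)
    (hconn : G.Connected) (k : ℕ) (f : V → Fin k) (hsurj : Function.Surjective f)
    (hf : ∀ u v : V, f u = f v ↔
      ∀ x : V, (G.Adj u x ∨ u = x) ↔ (G.Adj v x ∨ v = x)) :
    Fintype.card V - k ≤ localDim G :=
  stmt_0_general G k f hf
end

section
/- For a connected graph G with n(G) ≥ 3, the local metric dimension of G equals n(G) - 1 if and only if G is the complete graph K_{n(G)}. -/
open SimpleGraph

variable {V : Type*}

/-!
Leaving out the two ends of a non-edge gives a local resolving set of size `n - 2`, so a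
non-complete graph has `dim_l ≤ n - 2`. In `K_n` every vertex of `W` is at distance `1` from
any two vertices outside `W`, so a local resolving set of `K_n` misses at most one vertex.
-/

section LocalResolving

variable [Fintype V]

lemma isLocalResolvingSet_of_forall_not_adj {G : SimpleGraph V} {W : Finset V}
    (h : ∀ u ∉ W, ∀ v ∉ W, ¬G.Adj u v) : IsLocalResolvingSet G W :=
  fun u v hu hv huv => absurd huv (h u hu v hv)

lemma isLocalResolvingSet_of_card_compl_le_one [DecidableEq V] (G : SimpleGraph V) {W : Finset V}
    (hW : Wᶜ.card ≤ 1) : IsLocalResolvingSet G W := by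
  refine isLocalResolvingSet_of_forall_not_adj fun u hu v hv => ?_
  rw [Finset.card_le_one] at hW
  rw [hW u (Finset.mem_compl.mpr hu) v (Finset.mem_compl.mpr hv)]
  exact G.irrefl

lemma localDim_le_card {G : SimpleGraph V} {W : Finset V} (hW : IsLocalResolvingSet G W) :
    localDim G ≤ W.card :=
  Nat.sInf_le ⟨W, hW, rfl⟩

lemma localDim_le_card_sub_two_of_not_adj [DecidableEq V] {G : SimpleGraph V} {a b : V}
    (hab : a ≠ b) (hnadj : ¬G.Adj a b) : localDim G ≤ Fintype.card V - 2 := by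
  have hW : IsLocalResolvingSet G {a, b}ᶜ := by
    refine isLocalResolvingSet_of_forall_not_adj fun u hu v hv => ?_
    simp only [Finset.mem_compl, not_not, Finset.mem_insert, Finset.mem_singleton] at hu hv
    rcases hu with rfl | rfl <;> rcases hv with rfl | rfl
    exacts [G.irrefl, hnadj, fun h => hnadj h.symm, G.irrefl]
  simpa only [Finset.card_compl, Finset.card_pair hab] using localDim_le_card hW

lemma card_sub_one_le_card_of_isLocalResolvingSet_top {W : Finset V}
    (hW : IsLocalResolvingSet (⊤ : SimpleGraph V) W) : Fintype.card V - 1 ≤ W.card := by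
  classical
  by_contra! hlt
  have hcompl : 1 < Wᶜ.card := by rw [Finset.card_compl]; omega
  obtain ⟨u, hu, v, hv, huv⟩ := Finset.one_lt_card.mp hcompl
  rw [Finset.mem_compl] at hu hv
  obtain ⟨w, hw, hdist⟩ := hW u v hu hv ((top_adj u v).mpr huv)
  have hdist_one {x : V} (hx : x ∉ W) : (⊤ : SimpleGraph V).dist x w = 1 :=
    dist_eq_one_iff_adj.mpr ((top_adj x w).mpr (ne_of_mem_of_not_mem hw hx).symm)
  exact hdist ((hdist_one hu).trans (hdist_one hv).symm)

theorem localDim_top : localDim (⊤ : SimpleGraph V) = Fintype.card V - 1 := by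
  classical
  obtain ⟨W, -, hcard⟩ :=
    Finset.exists_subset_card_eq (s := (Finset.univ : Finset V)) (Nat.sub_le (Fintype.card V) 1)
  have hW : IsLocalResolvingSet (⊤ : SimpleGraph V) W :=
    isLocalResolvingSet_of_card_compl_le_one _ (by rw [Finset.card_compl, hcard]; omega)
  refine le_antisymm (hcard ▸ localDim_le_card hW) (le_csInf ⟨_, W, hW, rfl⟩ ?_)
  rintro k ⟨W', hW', rfl⟩
  exact card_sub_one_le_card_of_isLocalResolvingSet_top hW'

end LocalResolving

theorem stmt_1_general [Fintype V] (G : SimpleGraph V) :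
    localDim G = Fintype.card V - 1 ↔ G = ⊤ := by
  classical
  refine ⟨fun h => ?_, fun h => h ▸ localDim_top⟩
  by_contra hne
  obtain ⟨a, b, hab, hnadj⟩ := ne_top_iff_exists_not_adj.mp hne
  have htwo : 2 ≤ Fintype.card V := Fintype.one_lt_card_iff_nontrivial.mpr ⟨a, b, hab⟩
  have hle := localDim_le_card_sub_two_of_not_adj hab hnadj
  omega

/-- For a connected graph `G` with `n(G) ≥ 3`, `dim_l(G) = n(G) - 1` iff `G` is complete. -/
theorem stmt_1 [Fintype V] (G : SimpleGraph V) (hn : 3 ≤ Fintype.card V)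
    (hconn : G.Connected) :
    localDim G = Fintype.card V - 1 ↔ G = ⊤ :=
  stmt_1_general G
end

section
/- For a connected graph G with n(G) ≥ 3, the local metric dimension of G equals n(G) - 2 if and only if the clique number ω(G) equals n(G) - 1. -/
open SimpleGraph

variable {V : Type*}

/-!
Closed neighbourhoods `N[v] = {v} ∪ N(v)` control the distances that matter: a vertex of
`N[p] \ N[q]` is at distance at most 1 from `p` and at least 2 from `q`, while closed twins
(`N[p] = N[q]`) are at equal distance from every other vertex, so they cannot both lie outside a
local resolving set.

* If `G = K_n`, all distances are 1, so at most one vertex lies outside a local resolving set.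
* If `ω(G) = n - 1`, say `V \ {u}` is a clique, a non-edge `ab` shows that `V \ {a, b}` is a local
  resolving set; conversely, of three vertices outside a local resolving set `W`, two lie in the
  clique, and they can only be resolved by `u ∈ W`, which forces the third into the clique as well
  and makes two of them twins.
* If `ω(G) ≤ n - 2`, we find vertices `x, y, z` such that every edge among them joins vertices
  whose closed neighbourhoods differ outside `{x, y, z}`; then `V \ {x, y, z}` is a local resolving
  set. Start from a non-edge `ab` and a vertex `c` twin to neither (it exists by connectivity). If
  `{a, b, c}` fails, an edge such as `ac` has `N[a] ∆ N[c] = {b}`, and `{a, c, z}` works for any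
  `z ≠ b` twin to neither `a` nor `c`; if there is no such `z`, then `V \ {b}` is a clique.
-/

open scoped symmDiff

namespace SimpleGraph

variable {G : SimpleGraph V} {u v w : V}

def closedNbhd (G : SimpleGraph V) (v : V) : Set V := insert v (G.neighborSet v)

lemma mem_closedNbhd : w ∈ G.closedNbhd v ↔ w = v ∨ G.Adj v w := Iff.rfl

lemma self_mem_closedNbhd (v : V) : v ∈ G.closedNbhd v := Set.mem_insert v _

lemma Adj.mem_closedNbhd (h : G.Adj v w) : w ∈ G.closedNbhd v := Or.inr h

lemma mem_closedNbhd_comm : w ∈ G.closedNbhd v ↔ v ∈ G.closedNbhd w := by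
  simp only [mem_closedNbhd, eq_comm (a := w), G.adj_comm v w]

lemma adj_of_mem_closedNbhd (h : w ∈ G.closedNbhd v) (hne : v ≠ w) : G.Adj v w :=
  h.resolve_left hne.symm

lemma dist_le_one_of_mem_closedNbhd (h : w ∈ G.closedNbhd v) : G.dist v w ≤ 1 := by
  rcases h with rfl | h
  · simp
  · exact (dist_eq_one_iff_adj.mpr h).le

lemma Connected.dist_ne_of_mem_closedNbhd_of_notMem (hG : G.Connected)
    (hu : w ∈ G.closedNbhd u) (hv : w ∉ G.closedNbhd v) : G.dist u w ≠ G.dist v w := by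
  have : 1 < G.dist v w := hG.one_lt_dist_of_ne_of_not_adj
    (fun h => hv (Or.inl h.symm)) (fun h => hv h.mem_closedNbhd)
  have := dist_le_one_of_mem_closedNbhd hu
  omega

/-- A shortest walk from `v` to `w` can be rerouted to start at `u`, since its second vertex
lies in `N[v] ⊆ N[u]`. -/
lemma Connected.dist_le_of_closedNbhd_subset (hG : G.Connected)
    (h : G.closedNbhd v ⊆ G.closedNbhd u) (hw : w ≠ v) : G.dist u w ≤ G.dist v w := by
  obtain ⟨p, hp⟩ := hG.exists_walk_length_eq_dist v w
  cases p with
  | nil => exact absurd rfl hw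
  | @cons _ x _ hvx p =>
    calc G.dist u w ≤ G.dist u x + G.dist x w := hG.dist_triangle
      _ ≤ 1 + p.length := add_le_add (dist_le_one_of_mem_closedNbhd (h hvx.mem_closedNbhd))
          (dist_le p)
      _ = G.dist v w := by rw [← hp, Walk.length_cons, add_comm]

lemma Connected.dist_eq_of_closedNbhd_eq (hG : G.Connected)
    (h : G.closedNbhd u = G.closedNbhd v) (hu : w ≠ u) (hv : w ≠ v) :
    G.dist u w = G.dist v w :=
  (hG.dist_le_of_closedNbhd_subset h.ge hv).antisymm (hG.dist_le_of_closedNbhd_subset h.le hu)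

lemma closedNbhd_eq_of_isClique_compl_singleton {u x y : V} (hu : G.IsClique ({u}ᶜ : Set V))
    (hxu : x ≠ u) (hyu : y ≠ u) (h : G.Adj u x ↔ G.Adj u y) :
    G.closedNbhd x = G.closedNbhd y := by
  ext w
  by_cases hwu : w = u
  · subst hwu
    simp only [mem_closedNbhd, hxu.symm, hyu.symm, false_or, G.adj_comm _ w, h]
  · have key : ∀ z, z ≠ u → w ∈ G.closedNbhd z := fun z hz =>
      (eq_or_ne w z).imp id fun hwz => hu hz hwu hwz.symm
    exact iff_of_true (key x hxu) (key y hyu)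

def IsSeparatedTriple (G : SimpleGraph V) (x y z : V) : Prop :=
  x ≠ y ∧ x ≠ z ∧ y ≠ z ∧
    (G.Adj x y → ¬ G.closedNbhd x ∆ G.closedNbhd y ⊆ {z}) ∧
    (G.Adj x z → ¬ G.closedNbhd x ∆ G.closedNbhd z ⊆ {y}) ∧
    (G.Adj y z → ¬ G.closedNbhd y ∆ G.closedNbhd z ⊆ {x})

lemma closedNbhd_eq_of_symmDiff_subset_singleton {p q r : V} (hp : r ∈ G.closedNbhd p)
    (hq : r ∈ G.closedNbhd q) (h : G.closedNbhd p ∆ G.closedNbhd q ⊆ {r}) :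
    G.closedNbhd p = G.closedNbhd q := by
  by_contra hne
  obtain ⟨w, hw⟩ := Set.symmDiff_nonempty.mpr hne
  obtain rfl : w = r := h hw
  rcases hw with ⟨-, hw⟩ | ⟨-, hw⟩
  exacts [hw hq, hw hp]

lemma Connected.exists_closedNbhd_ne_ne (hG : G.Connected) {a b : V}
    (hab : b ∉ G.closedNbhd a) :
    ∃ c, G.closedNbhd c ≠ G.closedNbhd a ∧ G.closedNbhd c ≠ G.closedNbhd b := by
  by_contra! h
  have hstep : ∀ {x y}, G.Adj x y → G.closedNbhd x = G.closedNbhd a →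
      G.closedNbhd y = G.closedNbhd a := fun {x y} hxy hx => by
    by_contra hy
    have hya : a ∈ G.closedNbhd y := mem_closedNbhd_comm.mp (hx ▸ hxy.mem_closedNbhd)
    exact hab (mem_closedNbhd_comm.mp (h y hy ▸ hya))
  have hwalk : ∀ {x y} (p : G.Walk x y), G.closedNbhd x = G.closedNbhd a →
      G.closedNbhd y = G.closedNbhd a := by
    intro x y p
    induction p with
    | nil => exact id
    | cons hxy _ ih => exact fun hx => ih (hstep hxy hx)
  obtain ⟨p⟩ := hG.preconnected a b
  exact hab (hwalk p rfl ▸ self_mem_closedNbhd b)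

lemma exists_isSeparatedTriple_of_symmDiff_eq_singleton
    (hω : ∀ u, ¬ G.IsClique ({u}ᶜ : Set V)) {a b c : V} (hac : G.Adj a c)
    (h : G.closedNbhd a ∆ G.closedNbhd c = {b}) : ∃ x y z, G.IsSeparatedTriple x y z := by
  have hiff : ∀ y, y ≠ b → (y ∈ G.closedNbhd a ↔ y ∈ G.closedNbhd c) := fun y hy => by
    have : y ∉ G.closedNbhd a ∆ G.closedNbhd c := h ▸ hy
    exact ⟨fun ha => by_contra fun hc => this (Or.inl ⟨ha, hc⟩),
      fun hc => by_contra fun ha => this (Or.inr ⟨hc, ha⟩)⟩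
  by_cases hz :
      ∃ z, z ≠ b ∧ G.closedNbhd z ≠ G.closedNbhd a ∧ G.closedNbhd z ≠ G.closedNbhd c
  · obtain ⟨z, hzb, hza, hzc⟩ := hz
    refine ⟨a, c, z, hac.ne, fun h => hza (h ▸ rfl), fun h => hzc (h ▸ rfl), ?_, ?_, ?_⟩
    · exact fun _ hsub => hzb (Set.singleton_subset_singleton.mp (h ▸ hsub)).symm
    · refine fun haz hsub => hza (closedNbhd_eq_of_symmDiff_subset_singleton hac.mem_closedNbhd
        ?_ hsub).symm
      exact mem_closedNbhd_comm.mp ((hiff z hzb).mp haz.mem_closedNbhd)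
    · refine fun hcz hsub => hzc (closedNbhd_eq_of_symmDiff_subset_singleton
        hac.symm.mem_closedNbhd ?_ hsub).symm
      exact mem_closedNbhd_comm.mp ((hiff z hzb).mpr hcz.mem_closedNbhd)
  · push Not at hz
    have hmem : ∀ y, y ≠ b → y ∈ G.closedNbhd a ∧ y ∈ G.closedNbhd c := fun y hy => by
      by_cases hya : G.closedNbhd y = G.closedNbhd a
      · have := hya ▸ self_mem_closedNbhd y
        exact ⟨this, (hiff y hy).mp this⟩
      · have := hz y hy hya ▸ self_mem_closedNbhd y
        exact ⟨(hiff y hy).mpr this, this⟩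
    refine (hω b fun p hp q hq hpq => adj_of_mem_closedNbhd ?_ hpq).elim
    by_cases hpa : G.closedNbhd p = G.closedNbhd a
    · exact hpa ▸ (hmem q hq).1
    · exact hz p hp hpa ▸ (hmem q hq).2

lemma Connected.exists_isSeparatedTriple (hG : G.Connected)
    (hω : ∀ u, ¬ G.IsClique ({u}ᶜ : Set V)) : ∃ x y z, G.IsSeparatedTriple x y z := by
  obtain ⟨a, b, hab, hnadj⟩ : ∃ a b, a ≠ b ∧ ¬ G.Adj a b := by
    by_contra! h
    exact hω hG.nonempty.some fun x _ y _ hxy => h x y hxy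
  have hba : b ∉ G.closedNbhd a := fun h => h.elim (fun h => hab h.symm) hnadj
  obtain ⟨c, hca, hcb⟩ := hG.exists_closedNbhd_ne_ne hba
  by_cases hac : G.Adj a c ∧ G.closedNbhd a ∆ G.closedNbhd c ⊆ {b}
  · exact exists_isSeparatedTriple_of_symmDiff_eq_singleton hω hac.1
      ((Set.symmDiff_nonempty.mpr (Ne.symm hca)).subset_singleton_iff.mp hac.2)
  by_cases hbc : G.Adj b c ∧ G.closedNbhd b ∆ G.closedNbhd c ⊆ {a}
  · exact exists_isSeparatedTriple_of_symmDiff_eq_singleton hω hbc.1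
      ((Set.symmDiff_nonempty.mpr (Ne.symm hcb)).subset_singleton_iff.mp hbc.2)
  exact ⟨a, b, c, hab, fun h => hca (h ▸ rfl), fun h => hcb (h ▸ rfl),
    fun h => absurd h hnadj, fun h h' => hac ⟨h, h'⟩, fun h h' => hbc ⟨h, h'⟩⟩

lemma Connected.exists_dist_ne_of_not_symmDiff_subset (hG : G.Connected) {p q r : V}
    (hpq : G.Adj p q) (h : ¬ G.closedNbhd p ∆ G.closedNbhd q ⊆ {r}) :
    ∃ w, w ≠ p ∧ w ≠ q ∧ w ≠ r ∧ G.dist p w ≠ G.dist q w := by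
  obtain ⟨w, hw, hwr⟩ := Set.not_subset.mp h
  refine ⟨w, ?_, ?_, hwr, ?_⟩
  · rintro rfl
    rcases hw with ⟨-, hw⟩ | ⟨-, hw⟩
    exacts [hw hpq.symm.mem_closedNbhd, hw (self_mem_closedNbhd w)]
  · rintro rfl
    rcases hw with ⟨-, hw⟩ | ⟨-, hw⟩
    exacts [hw (self_mem_closedNbhd w), hw hpq.mem_closedNbhd]
  · rcases hw with ⟨hp, hq⟩ | ⟨hq, hp⟩
    exacts [hG.dist_ne_of_mem_closedNbhd_of_notMem hp hq,
      (hG.dist_ne_of_mem_closedNbhd_of_notMem hq hp).symm]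

lemma IsSeparatedTriple.isLocalResolvingSet_compl [Fintype V] [DecidableEq V] {x y z : V}
    (hG : G.Connected) (h : G.IsSeparatedTriple x y z) :
    IsLocalResolvingSet G ({x, y, z} : Finset V)ᶜ := by
  obtain ⟨-, -, -, hxy, hxz, hyz⟩ := h
  have hswap : ∀ {p q r : V}, (G.Adj p q → ¬ G.closedNbhd p ∆ G.closedNbhd q ⊆ {r}) →
      G.Adj q p → ¬ G.closedNbhd q ∆ G.closedNbhd p ⊆ {r} :=
    fun h hqp => symmDiff_comm (G.closedNbhd _) _ ▸ h hqp.symm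
  have key : ∀ {p q r : V}, G.Adj p q → ¬ G.closedNbhd p ∆ G.closedNbhd q ⊆ {r} →
      (∀ w, w ≠ p → w ≠ q → w ≠ r → w ∉ ({x, y, z} : Finset V)) →
      ∃ w ∈ ({x, y, z} : Finset V)ᶜ, G.dist p w ≠ G.dist q w := fun hpq hsep hT => by
    obtain ⟨w, hwp, hwq, hwr, hne⟩ := hG.exists_dist_ne_of_not_symmDiff_subset hpq hsep
    exact ⟨w, Finset.mem_compl.mpr (hT w hwp hwq hwr), hne⟩
  intro p q hp hq hpq
  simp only [Finset.mem_compl, Finset.mem_insert, Finset.mem_singleton, not_not] at hp hq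
  rcases hp with rfl | rfl | rfl <;> rcases hq with rfl | rfl | rfl
  all_goals first
    | exact absurd hpq (G.loopless.irrefl _)
    | refine key hpq (hxy hpq) ?_ | refine key hpq (hxz hpq) ?_ | refine key hpq (hyz hpq) ?_
    | refine key hpq (hswap hxy hpq) ?_ | refine key hpq (hswap hxz hpq) ?_
    | refine key hpq (hswap hyz hpq) ?_
  all_goals
    intro w
    simp only [Finset.mem_insert, Finset.mem_singleton]
    tauto

section CliqueNum

variable [Fintype V]

lemma cliqueNum_le_card : G.cliqueNum ≤ Fintype.card V := by
  obtain ⟨s, hs⟩ := G.exists_isNClique_cliqueNum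
  exact hs.card_eq ▸ s.card_le_univ

lemma eq_top_of_cliqueNum_eq_card (h : G.cliqueNum = Fintype.card V) : G = ⊤ := by
  obtain ⟨s, hs⟩ := G.exists_isNClique_cliqueNum
  obtain rfl : s = Finset.univ := Finset.eq_univ_of_card s (hs.card_eq.trans h)
  simpa [isClique_univ] using hs.isClique

lemma exists_not_adj_of_cliqueNum_lt (h : G.cliqueNum < Fintype.card V) :
    ∃ a b, a ≠ b ∧ ¬ G.Adj a b := by
  by_contra! h'
  have := (show G.IsClique (Finset.univ : Finset V) from fun x _ y _ => h' x y).card_le_cliqueNum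
  rw [Finset.card_univ] at this
  omega

lemma exists_isClique_compl_singleton [Nonempty V] (h : G.cliqueNum = Fintype.card V - 1) :
    ∃ u, G.IsClique ({u}ᶜ : Set V) := by
  classical
  obtain ⟨s, hs⟩ := G.exists_isNClique_cliqueNum
  have : sᶜ.card = 1 := by
    rw [Finset.card_compl, hs.card_eq, h]
    have := Fintype.card_pos (α := V)
    omega
  obtain ⟨u, hu⟩ := Finset.card_eq_one.mp this
  refine ⟨u, ?_⟩
  rw [← compl_compl s, hu] at hs
  simpa using hs.isClique

lemma not_isClique_compl_singleton (h : G.cliqueNum + 2 ≤ Fintype.card V) (u : V) :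
    ¬ G.IsClique ({u}ᶜ : Set V) := by
  classical
  intro hu
  have := (show G.IsClique (({u}ᶜ : Finset V) : Set V) by simpa using hu).card_le_cliqueNum
  rw [Finset.card_compl, Finset.card_singleton] at this
  omega

end CliqueNum

end SimpleGraph

section LocalDim

variable [Fintype V] {G : SimpleGraph V} {W : Finset V}

lemma IsLocalResolvingSet.localDim_le (hW : IsLocalResolvingSet G W) : localDim G ≤ W.card :=
  Nat.sInf_le ⟨W, hW, rfl⟩

lemma localDim_le_card_sub [DecidableEq V] {T : Finset V} (hT : IsLocalResolvingSet G Tᶜ) :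
    localDim G ≤ Fintype.card V - T.card :=
  Finset.card_compl T ▸ hT.localDim_le

lemma card_sub_le_localDim [DecidableEq V] {k : ℕ}
    (h : ∀ W, IsLocalResolvingSet G W → Wᶜ.card ≤ k) :
    Fintype.card V - k ≤ localDim G := by
  obtain ⟨W, hW, hcard⟩ : ∃ W, IsLocalResolvingSet G W ∧ W.card = localDim G :=
    Nat.sInf_mem (s := {k | ∃ W : Finset V, IsLocalResolvingSet G W ∧ W.card = k})
      ⟨_, Finset.univ, fun u _ hu => absurd (Finset.mem_univ u) hu, rfl⟩
  have := h W hW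
  rw [Finset.card_compl] at this
  omega

lemma IsLocalResolvingSet.closedNbhd_ne (hG : G.Connected) (hW : IsLocalResolvingSet G W)
    {u v : V} (hu : u ∉ W) (hv : v ∉ W) (huv : u ≠ v) :
    G.closedNbhd u ≠ G.closedNbhd v := by
  intro h
  have hadj : G.Adj u v := adj_of_mem_closedNbhd (h ▸ self_mem_closedNbhd v) huv
  obtain ⟨w, hw, hne⟩ := hW u v hu hv hadj
  exact hne (hG.dist_eq_of_closedNbhd_eq h (ne_of_mem_of_not_mem hw hu)
    (ne_of_mem_of_not_mem hw hv))

lemma card_sub_one_le_localDim_top : Fintype.card V - 1 ≤ localDim (⊤ : SimpleGraph V) := by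
  classical
  refine card_sub_le_localDim fun W hW => Finset.card_le_one.mpr fun x hx y hy => ?_
  rw [Finset.mem_compl] at hx hy
  by_contra hxy
  obtain ⟨w, hw, hne⟩ := hW x y hx hy hxy
  rw [dist_top_of_ne (ne_of_mem_of_not_mem hw hx).symm,
    dist_top_of_ne (ne_of_mem_of_not_mem hw hy).symm] at hne
  exact hne rfl

lemma IsLocalResolvingSet.mem_of_isClique_compl_singleton {u x y : V}
    (hu : G.IsClique ({u}ᶜ : Set V)) (hW : IsLocalResolvingSet G W)
    (hx : x ∉ W) (hy : y ∉ W) (hxu : x ≠ u) (hyu : y ≠ u) (hxy : x ≠ y) : u ∈ W := by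
  obtain ⟨w, hw, hne⟩ := hW x y hx hy (hu hxu hyu hxy)
  by_contra hwu
  have hwu : w ≠ u := ne_of_mem_of_not_mem hw hwu
  rw [dist_eq_one_iff_adj.mpr (hu hxu hwu (ne_of_mem_of_not_mem hw hx).symm),
    dist_eq_one_iff_adj.mpr (hu hyu hwu (ne_of_mem_of_not_mem hw hy).symm)] at hne
  exact hne rfl

lemma card_sub_two_le_localDim (hG : G.Connected) {u : V} (hu : G.IsClique ({u}ᶜ : Set V)) :
    Fintype.card V - 2 ≤ localDim G := by
  classical
  refine card_sub_le_localDim fun W hW => ?_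
  by_contra! h
  obtain ⟨x, hx, y, hy, z, hz, hxy, hxz, hyz⟩ := Finset.two_lt_card.mp h
  rw [Finset.mem_compl] at hx hy hz
  by_cases huW : u ∈ W
  · have hne : ∀ {p q}, p ∉ W → q ∉ W → p ≠ q → ¬(G.Adj u p ↔ G.Adj u q) :=
      fun hp hq hpq h => hW.closedNbhd_ne hG hp hq hpq <|
        closedNbhd_eq_of_isClique_compl_singleton hu (ne_of_mem_of_not_mem huW hp).symm
          (ne_of_mem_of_not_mem huW hq).symm h
    have := hne hx hy hxy
    have := hne hx hz hxz
    have := hne hy hz hyz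
    tauto
  · refine huW ?_
    by_cases hxu : x = u
    · exact hW.mem_of_isClique_compl_singleton hu hy hz (hxu ▸ hxy.symm) (hxu ▸ hxz.symm) hyz
    by_cases hyu : y = u
    · exact hW.mem_of_isClique_compl_singleton hu hx hz hxu (hyu ▸ hyz.symm) hxz
    · exact hW.mem_of_isClique_compl_singleton hu hx hy hxu hyu hxy

lemma localDim_le_card_sub_two {a b : V} (hab : a ≠ b) (h : ¬ G.Adj a b) :
    localDim G ≤ Fintype.card V - 2 := by
  classical
  have hres : IsLocalResolvingSet G ({a, b} : Finset V)ᶜ := by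
    intro x y hx hy hxy
    simp only [Finset.mem_compl, Finset.mem_insert, Finset.mem_singleton, not_not] at hx hy
    rcases hx with rfl | rfl <;> rcases hy with rfl | rfl
    all_goals first
      | exact absurd hxy (G.loopless.irrefl _)
      | exact absurd hxy h
      | exact absurd hxy.symm h
  simpa [Finset.card_pair hab] using localDim_le_card_sub hres

lemma localDim_eq_card_sub_two_of_cliqueNum_eq (hG : G.Connected)
    (h : G.cliqueNum = Fintype.card V - 1) : localDim G = Fintype.card V - 2 := by
  have := hG.nonempty
  obtain ⟨u, hu⟩ := exists_isClique_compl_singleton h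
  obtain ⟨a, b, hab, hnadj⟩ := exists_not_adj_of_cliqueNum_lt (G := G) (by
    have := Fintype.card_pos (α := V)
    omega)
  exact (localDim_le_card_sub_two hab hnadj).antisymm (card_sub_two_le_localDim hG hu)

lemma localDim_le_card_sub_three (hG : G.Connected) (h : G.cliqueNum + 2 ≤ Fintype.card V) :
    localDim G ≤ Fintype.card V - 3 := by
  classical
  obtain ⟨x, y, z, hsep⟩ := hG.exists_isSeparatedTriple (not_isClique_compl_singleton h)
  have hres := hsep.isLocalResolvingSet_compl hG
  obtain ⟨hxy, hxz, hyz, -⟩ := hsep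
  simpa [Finset.card_eq_three.mpr ⟨x, y, z, hxy, hxz, hyz, rfl⟩] using localDim_le_card_sub hres

end LocalDim

/-- For a connected graph `G` with `n(G) ≥ 3`, `dim_l(G) = n(G) - 2` iff `ω(G) = n(G) - 1`. -/
theorem stmt_2 [Fintype V] (G : SimpleGraph V) (hn : 3 ≤ Fintype.card V)
    (hconn : G.Connected) :
    localDim G = Fintype.card V - 2 ↔ G.cliqueNum = Fintype.card V - 1 := by
  have := G.cliqueNum_le_card
  obtain h | h | h : G.cliqueNum = Fintype.card V ∨ G.cliqueNum = Fintype.card V - 1 ∨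
      G.cliqueNum + 2 ≤ Fintype.card V := by omega
  · obtain rfl := eq_top_of_cliqueNum_eq_card h
    have := card_sub_one_le_localDim_top (V := V)
    omega
  · exact iff_of_true (localDim_eq_card_sub_two_of_cliqueNum_eq hconn h) h
  · have := localDim_le_card_sub_three hconn h
    omega
end

section
/- For a connected graph G with n(G) ≥ 3, the local metric dimension of G equals 1 if and only if G is bipartite. -/
open SimpleGraph

variable {V : Type*}

/-!
A single vertex `w` locally resolves `G` exactly when no edge joins two vertices at equal
distance from `w`. Distances to `w` of adjacent vertices differ by at most one, so then the
parity of `d(·, w)` is a proper 2-colouring; conversely, in a bipartite graph an edge between two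
vertices equidistant from `w` would close an odd closed walk through `w`. A connected graph on at
least two vertices has an edge, so the empty set does not resolve it and `dim_l(G) ≥ 1`.
-/

namespace SimpleGraph

variable {G : SimpleGraph V} {u v w : V}

lemma Adj.dist_ne_dist_of_colorable_two (hG : G.Colorable 2) (huv : G.Adj u v)
    (hw : G.Reachable u w) : G.dist u w ≠ G.dist v w := by
  intro heq
  obtain ⟨p, hp⟩ := hw.exists_walk_length_eq_dist
  obtain ⟨q, hq⟩ := (huv.symm.reachable.trans hw).exists_walk_length_eq_dist
  have hloop := two_colorable_iff_forall_loop_even.mp hG u (.cons huv (q.append p.reverse))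
  simp only [Walk.length_cons, Walk.length_append, Walk.length_reverse, hp, hq, heq] at hloop
  exact Nat.even_add_one.mp hloop (Even.add_self _)

lemma colorable_two_of_forall_adj_dist_ne (w : V)
    (h : ∀ u v, G.Adj u v → G.dist u w ≠ G.dist v w) : G.Colorable 2 := by
  let c : G.Coloring Bool := Coloring.mk (fun x => decide (Even (G.dist w x))) fun {u v} huv => by
    have hne : G.dist w u ≠ G.dist w v := by simpa only [dist_comm] using h u v huv
    rcases huv.diff_dist_adj (u := w) with hd | hd | hd <;>
      grind [Nat.even_add_one]
  simpa using c.colorable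

end SimpleGraph

lemma Nat.sInf_eq_one_iff {s : Set ℕ} : sInf s = 1 ↔ 0 ∉ s ∧ 1 ∈ s := by
  constructor
  · intro h
    refine ⟨fun h0 => by simp [Nat.sInf_eq_zero.mpr (.inl h0)] at h, ?_⟩
    exact h ▸ Nat.sInf_mem (Nat.nonempty_of_pos_sInf (by omega))
  · rintro ⟨h0, h1⟩
    refine le_antisymm (Nat.sInf_le h1) (Nat.one_le_iff_ne_zero.mpr fun h => h0 ?_)
    exact h ▸ Nat.sInf_mem ⟨1, h1⟩

section LocalResolving

variable [Fintype V] {G : SimpleGraph V}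

lemma isLocalResolvingSet_empty_iff : IsLocalResolvingSet G ∅ ↔ G = ⊥ := by
  simp [IsLocalResolvingSet, SimpleGraph.eq_bot_iff_forall_not_adj]

/-- The vertex `w` itself never needs resolving: its neighbours are at distance `1`, it at `0`. -/
lemma isLocalResolvingSet_singleton_iff {w : V} :
    IsLocalResolvingSet G {w} ↔ ∀ u v, G.Adj u v → G.dist u w ≠ G.dist v w := by
  refine ⟨fun hW u v huv => ?_, fun h u v _ _ huv => ⟨w, Finset.mem_singleton_self w, h u v huv⟩⟩
  by_cases hu : u = w
  · subst hu
    rw [dist_self, dist_comm, dist_eq_one_iff_adj.mpr huv]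
    exact zero_ne_one
  by_cases hv : v = w
  · subst hv
    rw [dist_self, dist_eq_one_iff_adj.mpr huv]
    exact one_ne_zero
  obtain ⟨x, hx, hd⟩ := hW u v (by simpa) (by simpa) huv
  rwa [Finset.mem_singleton.mp hx] at hd

lemma localDim_eq_one_iff :
    localDim G = 1 ↔ G ≠ ⊥ ∧ ∃ w, IsLocalResolvingSet G {w} := by
  have h0 : 0 ∈ {k | ∃ W : Finset V, IsLocalResolvingSet G W ∧ W.card = k} ↔ G = ⊥ := by
    simp [Finset.card_eq_zero, isLocalResolvingSet_empty_iff]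
  have h1 : 1 ∈ {k | ∃ W : Finset V, IsLocalResolvingSet G W ∧ W.card = k} ↔
      ∃ w, IsLocalResolvingSet G {w} := by
    simp [Finset.card_eq_one]
  rw [localDim, Nat.sInf_eq_one_iff, h0, h1]

end LocalResolving

/-- For a connected graph `G` with `n(G) ≥ 3`, `dim_l(G) = 1` iff `G` is bipartite. -/
theorem stmt_3 [Fintype V] (G : SimpleGraph V) (hn : 3 ≤ Fintype.card V)
    (hconn : G.Connected) :
    localDim G = 1 ↔ G.Colorable 2 := by
  have : Nontrivial V := Fintype.one_lt_card_iff_nontrivial.mp (by omega)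
  obtain ⟨w⟩ := hconn.nonempty
  have hne : G ≠ ⊥ := ne_bot_iff_exists_adj.mpr ⟨w, hconn.preconnected.exists_adj_of_nontrivial w⟩
  rw [localDim_eq_one_iff]
  constructor
  · rintro ⟨-, w, hw⟩
    exact colorable_two_of_forall_adj_dist_ne w (isLocalResolvingSet_singleton_iff.mp hw)
  · intro hG
    refine ⟨hne, w, isLocalResolvingSet_singleton_iff.mpr fun u v huv => ?_⟩
    exact huv.dist_ne_dist_of_colorable_two hG (hconn u w)
end

section
/- If ω(G) = n(G) - 2, G is connected with n(G) ≥ 5, and G contains an induced subgraph isomorphic to Γ_1 or Γ_2, then dim_l(G) ≤ n(G) - 4. -/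
open SimpleGraph

variable {V : Type*}

/-!
In `Γ₁` and `Γ₂` any two of `v₁, v₂, v₃, v₄` are told apart by adjacency to `v₅` or `v₆`.
Adjacency is distance one, so in `G` the complement of the image of `{v₁, v₂, v₃, v₄}`
is a local resolving set.
-/

def NeighborSeparated (G : SimpleGraph V) (S : Finset V) : Prop :=
  ∀ u ∈ S, ∀ v ∈ S, G.Adj u v → ∃ w ∉ S, ¬(G.Adj u w ↔ G.Adj v w)

theorem SimpleGraph.dist_ne_of_not_adj_iff {G : SimpleGraph V} {u v w : V}
    (h : ¬(G.Adj u w ↔ G.Adj v w)) : G.dist u w ≠ G.dist v w := by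
  intro hdist
  rw [← dist_eq_one_iff_adj, ← dist_eq_one_iff_adj, hdist] at h
  exact h Iff.rfl

theorem isLocalResolvingSet_compl [Fintype V] [DecidableEq V] {G : SimpleGraph V}
    {S : Finset V} (hS : NeighborSeparated G S) : IsLocalResolvingSet G Sᶜ := by
  intro u v hu hv huv
  rw [Finset.notMem_compl] at hu hv
  obtain ⟨w, hwS, hw⟩ := hS u hu v hv huv
  exact ⟨w, Finset.mem_compl.mpr hwS, dist_ne_of_not_adj_iff hw⟩

theorem localDim_le_card_sub_s18 [Fintype V] {G : SimpleGraph V} {S : Finset V}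
    (hS : NeighborSeparated G S) : localDim G ≤ Fintype.card V - S.card := by
  classical
  exact Nat.sInf_le ⟨Sᶜ, isLocalResolvingSet_compl hS, Finset.card_compl S⟩

theorem NeighborSeparated.map {W : Type*} {H : SimpleGraph W} {G : SimpleGraph V}
    {S : Finset W} (hS : NeighborSeparated H S) (f : H ↪g G) :
    NeighborSeparated G (S.map f.toEmbedding) := by
  simp only [NeighborSeparated, Finset.forall_mem_map, RelEmbedding.coe_toEmbedding]
  intro u hu v hv huv
  obtain ⟨w, hwS, hw⟩ := hS u hu v hv (f.map_adj_iff.mp huv)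
  refine ⟨f w, fun hfw => hwS ?_, by simpa only [f.map_adj_iff] using hw⟩
  rwa [← RelEmbedding.coe_toEmbedding, Finset.mem_map' f.toEmbedding] at hfw

instance : DecidableRel Gamma1.Adj := fun u v => decidable_of_iff' _ (fromRel_adj _ u v)
instance : DecidableRel Gamma2.Adj := fun u v => decidable_of_iff' _ (fromRel_adj _ u v)

theorem neighborSeparated_gamma1 : NeighborSeparated Gamma1 {0, 1, 2, 3} := by
  unfold NeighborSeparated; decide

theorem neighborSeparated_gamma2 : NeighborSeparated Gamma2 {0, 1, 2, 3} := by
  unfold NeighborSeparated; decide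

theorem stmt_18_general [Fintype V] (G : SimpleGraph V)
    (hind : Nonempty (Gamma1 ↪g G) ∨ Nonempty (Gamma2 ↪g G)) :
    localDim G ≤ Fintype.card V - 4 := by
  rcases hind with ⟨⟨f⟩⟩ | ⟨⟨f⟩⟩
  · exact localDim_le_card_sub_s18 (neighborSeparated_gamma1.map f)
  · exact localDim_le_card_sub_s18 (neighborSeparated_gamma2.map f)

/-- If `G` is connected with `n(G) ≥ 5`, `ω(G) = n(G) - 2`, and `G` contains an induced
subgraph isomorphic to `Γ₁` or `Γ₂`, then `dim_l(G) ≤ n(G) - 4`. -/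
theorem stmt_18 [Fintype V] (G : SimpleGraph V) (hconn : G.Connected)
    (hn : 5 ≤ Fintype.card V) (hw : G.cliqueNum = Fintype.card V - 2)
    (hind : Nonempty (Gamma1 ↪g G) ∨ Nonempty (Gamma2 ↪g G)) :
    localDim G ≤ Fintype.card V - 4 :=
  stmt_18_general G hind
end
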